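/- arXiv:1809.05661 — 4 statements merged into one kernel-verified Lean document; each statement's English description precedes it below -/
import Mathlib

section
/- For reals c > 0, n > 0, integers ρ ≥ 1, l ≥ 1, the function u ↦ −((lρ−1)!/Γ((n/c + l)ρ + 1)) · Σ_{i=0}^{lρ−1} (Γ(nρ/c + 1 + i)/(i! c^{lρ−i})) · u^i (1+cu)^{−(nρ/c + 1 + i)} is an antiderivative on (0,∞) of u ↦ u^{lρ−1} (1+cu)^{−(n/c + l)ρ − 1}. -/
/-!
Write `A = nρ/c + 1` and `m = lρ`, so that `(n/c + l)ρ + 1 = A + m`. The derivative of the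
`i`-th summand `Γ(A+i)/(i! c^(m-i)) · u^i (1+cu)^(-(A+i))` splits as `g i - g (i+1)` with
`g i = Γ(A+i)/(i! c^(m-i)) · i u^(i-1) (1+cu)^(-(A+i))` (`telescopingPart`): the second half
matches `g (i+1)` by `Γ(A+i+1) = (A+i) Γ(A+i)`. The sum therefore telescopes to
`g 0 - g m = -g m`, and `g m` is `Γ(A+m)/(m-1)! · u^(m-1) (1+cu)^(-(A+m))`.
-/

open Finset Real

namespace BaskakovIBP

variable (A c : ℝ) (m : ℕ)

noncomputable def term (i : ℕ) (v : ℝ) : ℝ :=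
  Gamma (A + i) / ((i.factorial : ℝ) * c ^ (m - i)) * v ^ i * (1 + c * v) ^ (-(A + (i : ℝ)))

noncomputable def telescopingPart (u : ℝ) (i : ℕ) : ℝ :=
  Gamma (A + i) / ((i.factorial : ℝ) * c ^ (m - i)) * i * u ^ (i - 1) *
    (1 + c * u) ^ (-(A + (i : ℝ)))

theorem hasDerivAt_pow_mul_one_add_mul_rpow (i : ℕ) (s u : ℝ) (hu : 1 + c * u ≠ 0) :
    HasDerivAt (fun v : ℝ => v ^ i * (1 + c * v) ^ (-s))
      (i * u ^ (i - 1) * (1 + c * u) ^ (-s) - s * c * u ^ i * (1 + c * u) ^ (-s - 1)) u := by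
  have hlin : HasDerivAt (fun v : ℝ => 1 + c * v) c u := by
    simpa using ((hasDerivAt_id u).const_mul c).const_add 1
  exact ((hasDerivAt_pow i u).mul (hlin.rpow_const (p := -s) (Or.inl hu))).congr_deriv (by ring)

variable {A c m}

theorem telescopingPart_zero (u : ℝ) : telescopingPart A c m u 0 = 0 := by
  simp [telescopingPart]

theorem hasDerivAt_term (hA : 0 < A) (hc : c ≠ 0) {u : ℝ} (hu : 1 + c * u ≠ 0) {i : ℕ}
    (hi : i < m) :
    HasDerivAt (term A c m i)
      (telescopingPart A c m u i - telescopingPart A c m u (i + 1)) u := by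
  have hGamma : Gamma (A + (i + 1 : ℕ)) = (A + i) * Gamma (A + i) := by
    rw [Nat.cast_succ, ← add_assoc]
    exact Gamma_add_one (by positivity)
  have hcpow : c ^ (m - i) = c ^ (m - (i + 1)) * c := by
    rw [← pow_succ]
    congr 1
    omega
  have hexp : -(A + ((i + 1 : ℕ) : ℝ)) = -(A + i) - 1 := by push_cast; ring
  have hfac : ((i + 1).factorial : ℝ) = (i + 1) * i.factorial := by
    push_cast [Nat.factorial_succ]; ring
  have hfac0 : (i.factorial : ℝ) ≠ 0 := by positivity
  have hderiv := (hasDerivAt_pow_mul_one_add_mul_rpow c i (A + i) u hu).const_mul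
    (Gamma (A + i) / ((i.factorial : ℝ) * c ^ (m - i)))
  simp only [← mul_assoc] at hderiv
  refine hderiv.congr_deriv ?_
  simp only [telescopingPart, hGamma, hcpow, hexp, hfac, Nat.add_sub_cancel]
  field_simp
  push_cast
  ring

theorem hasDerivAt_sum_term (hA : 0 < A) (hc : c ≠ 0) {u : ℝ} (hu : 1 + c * u ≠ 0) :
    HasDerivAt (fun v => ∑ i ∈ range m, term A c m i v) (-telescopingPart A c m u m) u := by
  have hsum := HasDerivAt.fun_sum (u := range m)
    fun i hi => hasDerivAt_term hA hc hu (mem_range.mp hi)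
  rwa [sum_range_sub' (telescopingPart A c m u), telescopingPart_zero, zero_sub] at hsum

theorem telescopingPart_self (hA : 0 < A) (hm : m ≠ 0) (u : ℝ) :
    (m - 1).factorial / Gamma (A + m) * telescopingPart A c m u m =
      u ^ (m - 1) * (1 + c * u) ^ (-(A + (m : ℝ))) := by
  have hmfac : (m : ℝ) * (m - 1).factorial = m.factorial := by
    exact_mod_cast Nat.mul_factorial_pred hm
  have hGamma : Gamma (A + m) ≠ 0 := (Gamma_pos_of_pos (by positivity)).ne'
  have hfac0 : (m.factorial : ℝ) ≠ 0 := by positivity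
  simp only [telescopingPart, Nat.sub_self, pow_zero, mul_one]
  field_simp
  linear_combination u ^ (m - 1) * (1 + c * u) ^ (-(A + (m : ℝ))) * hmfac

theorem hasDerivAt_antiderivative (hA : 0 < A) (hc : c ≠ 0) (hm : m ≠ 0) {u : ℝ}
    (hu : 1 + c * u ≠ 0) :
    HasDerivAt (fun v => -((m - 1).factorial / Gamma (A + m)) * ∑ i ∈ range m, term A c m i v)
      (u ^ (m - 1) * (1 + c * u) ^ (-(A + (m : ℝ)))) u := by
  refine ((hasDerivAt_sum_term hA hc hu).const_mul _).congr_deriv ?_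
  rw [neg_mul_neg, telescopingPart_self hA hm]

end BaskakovIBP

/-- Integration-by-parts identity (Baskakov case c > 0): an antiderivative on (0,∞)
of u ↦ u^{lρ−1} (1+cu)^{−(n/c + l)ρ − 1}. -/
theorem stmt_3 (c n : ℝ) (hc : 0 < c) (hn : 0 < n) (ρ l : ℕ) (hρ : 1 ≤ ρ) (hl : 1 ≤ l)
    (u : ℝ) (hu : 0 < u) :
    HasDerivAt (fun v : ℝ =>
      -((Nat.factorial (l * ρ - 1) : ℝ) / Real.Gamma ((n / c + l) * ρ + 1)) *
      ∑ i ∈ Finset.range (l * ρ),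
        (Real.Gamma (n * ρ / c + 1 + i) / ((Nat.factorial i : ℝ) * c ^ (l * ρ - i))) *
          v ^ i * (1 + c * v) ^ (-(n * ρ / c + 1 + (i : ℝ))))
      (u ^ (l * ρ - 1) * (1 + c * u) ^ (-((n / c + l) * (ρ : ℝ) + 1))) u := by
  have hA : 0 < n * ρ / c + 1 := by positivity
  have hm : l * ρ ≠ 0 := by positivity
  have hshift : (n / c + l) * (ρ : ℝ) + 1 = n * ρ / c + 1 + ((l * ρ : ℕ) : ℝ) := by
    push_cast; ring
  rw [hshift]
  exact BaskakovIBP.hasDerivAt_antiderivative hA hc.ne' hm (by positivity)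
end

section
/- For reals c > 0, n > c, integer ρ ≥ 1, and t ≥ 0: (c^ρ / B(ρ, nρ/c + 1)) · ∫_t^∞ u^{ρ−1} (1+cu)^{−(n/c+1)ρ − 1} du = Σ_{i=0}^{ρ−1} ((Π_{l=0}^{i−1}(nρ + c + cl))/i!) · t^i (1+ct)^{−(nρ/c + 1 + i)}, where B is the Beta function. -/
/-! The right-hand side `S(t) = ∑_{i < ρ} p_{m,i}(t)`, with `m = nρ + c`, telescopes under
differentiation: `p'_{m,0} = -m p_{m+c,0}` and `p'_{m,i+1} = m (p_{m+c,i} - p_{m+c,i+1})`, so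
`S' = -m p_{m+c,ρ-1}`. After evaluating the Beta function through `Γ(α + ρ) = α(α+1)⋯(α+ρ-1) Γ(α)`,
`m p_{m+c,ρ-1}` is exactly the integrand of the left-hand side, which is nonnegative; as
`S(t) → 0` for `t → ∞`, the fundamental theorem of calculus on `[t, ∞)` gives the identity. -/

open MeasureTheory Set Filter Topology Finset
open scoped Nat

lemma prod_range_succ_add_mul {R : Type*} [CommSemiring R] (c m : R) (i : ℕ) :
    ∏ l ∈ range (i + 1), (m + c * l) = m * ∏ l ∈ range i, (m + c + c * l) := by
  rw [prod_range_succ', mul_comm]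
  congr 1
  · simp
  · exact prod_congr rfl fun l _ => by push_cast; ring

lemma Real.Gamma_add_nat_eq_prod_mul {a : ℝ} (ha : 0 < a) (k : ℕ) :
    Real.Gamma (a + k) = (∏ l ∈ range k, (a + l)) * Real.Gamma a := by
  induction k with
  | zero => simp
  | succ k ih =>
    rw [Nat.cast_succ, ← add_assoc, Real.Gamma_add_one (by positivity), ih, prod_range_succ]
    ring

lemma pow_div_beta_eq_prod (c : ℝ) {α : ℝ} (hα : 0 < α) (k : ℕ) :
    c ^ (k + 1) / (Real.Gamma ((k + 1 : ℕ) : ℝ) * Real.Gamma α / Real.Gamma (α + (k + 1 : ℕ))) =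
      (∏ l ∈ range (k + 1), (c * α + c * l)) / k ! := by
  rw [Real.Gamma_add_nat_eq_prod_mul hα, Nat.cast_succ, Real.Gamma_nat_eq_factorial,
    mul_div_mul_right _ _ (Real.Gamma_pos_of_pos hα).ne', div_div_eq_mul_div]
  nth_rw 1 [← card_range (k + 1)]
  simp only [pow_card_mul_prod, mul_add]

noncomputable def baskakovBasis (c m : ℝ) (i : ℕ) (t : ℝ) : ℝ :=
  (∏ l ∈ range i, (m + c * l)) / i ! * t ^ i * (1 + c * t) ^ (-(m / c + i))

lemma mul_baskakovBasis_add {c : ℝ} (hc : c ≠ 0) (m : ℝ) (k : ℕ) (t : ℝ) :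
    m * baskakovBasis c (m + c) k t =
      (∏ l ∈ range (k + 1), (m + c * l)) / k ! * t ^ k * (1 + c * t) ^ (-(m / c + k + 1)) := by
  rw [baskakovBasis, prod_range_succ_add_mul, add_div, div_self hc]
  ring_nf

section Derivative

variable {c : ℝ} (m : ℝ) {t : ℝ}

lemma hasDerivAt_one_add_mul_rpow (s : ℝ) (ht : 1 + c * t ≠ 0) :
    HasDerivAt (fun u => (1 + c * u) ^ s) (c * s * (1 + c * t) ^ (s - 1)) t := by
  have h : HasDerivAt (fun u => 1 + c * u) c t := by
    simpa using ((hasDerivAt_id t).const_mul c).const_add 1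
  exact h.rpow_const (Or.inl ht)

lemma hasDerivAt_baskakovBasis_zero (hc : c ≠ 0) (ht : 1 + c * t ≠ 0) :
    HasDerivAt (baskakovBasis c m 0) (-(m * baskakovBasis c (m + c) 0 t)) t := by
  refine ((hasDerivAt_one_add_mul_rpow (-(m / c)) ht).congr_deriv ?_).congr_of_eventuallyEq
    (.of_forall fun u => by simp [baskakovBasis])
  rw [mul_baskakovBasis_add hc, show -(m / c) - 1 = -(m / c + ((0 : ℕ) : ℝ) + 1) by push_cast; ring]
  field_simp
  simp [mul_comm]

lemma hasDerivAt_baskakovBasis_succ (hc : c ≠ 0) (ht : 1 + c * t ≠ 0) (i : ℕ) :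
    HasDerivAt (baskakovBasis c m (i + 1))
      (m * (baskakovBasis c (m + c) i t - baskakovBasis c (m + c) (i + 1) t)) t := by
  set e : ℝ := -(m / c + (i + 1 : ℕ))
  set P := ∏ l ∈ range (i + 1), (m + c * l)
  refine ((((hasDerivAt_pow (i + 1) t).mul (hasDerivAt_one_add_mul_rpow e ht)).const_mul
    (P / (i + 1)!)).congr_deriv ?_).congr_of_eventuallyEq
    (.of_forall fun u => by simp [baskakovBasis, P, e, mul_assoc])
  have hce : c * e = -(m + c * (i + 1 : ℕ)) := by simp only [e]; field_simp
  rw [mul_sub, mul_baskakovBasis_add hc, mul_baskakovBasis_add hc, prod_range_succ _ (i + 1),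
    Nat.factorial_succ, Nat.cast_mul, show -(m / c + (i + 1 : ℕ) + 1) = e - 1 by ring,
    show -(m / c + i + 1) = e by simp only [e]; push_cast; ring, Nat.add_sub_cancel]
  field_simp
  linear_combination (P * t ^ (i + 1) * (1 + c * t) ^ (e - 1)) * hce

lemma hasDerivAt_sum_baskakovBasis (hc : c ≠ 0) (ht : 1 + c * t ≠ 0) (k : ℕ) :
    HasDerivAt (fun u => ∑ i ∈ range (k + 1), baskakovBasis c m i u)
      (-(m * baskakovBasis c (m + c) k t)) t := by
  induction k with
  | zero => simpa using hasDerivAt_baskakovBasis_zero m hc ht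
  | succ k ih =>
    simp only [sum_range_succ _ (k + 1)]
    exact (ih.add (hasDerivAt_baskakovBasis_succ m hc ht k)).congr_deriv (by ring)

end Derivative

section Tail

variable {c : ℝ}

lemma pow_mul_one_add_mul_rpow_neg_le (hc : 0 < c) (k : ℕ) (s : ℝ) {u : ℝ} (hu : 0 ≤ u) :
    u ^ k * (1 + c * u) ^ (-s) ≤ (1 + c * u) ^ (-(s - k)) / c ^ k := by
  have hpos : 0 < 1 + c * u := by positivity
  have hu' : u ^ k ≤ ((1 + c * u) / c) ^ k :=
    pow_le_pow_left₀ hu ((le_div_iff₀ hc).2 (by linarith)) k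
  calc u ^ k * (1 + c * u) ^ (-s) ≤ ((1 + c * u) / c) ^ k * (1 + c * u) ^ (-s) := by gcongr
    _ = (1 + c * u) ^ (-(s - k)) / c ^ k := by
      rw [neg_sub, sub_eq_add_neg, Real.rpow_add hpos, Real.rpow_natCast, div_pow]
      ring

lemma tendsto_pow_mul_one_add_mul_rpow_neg_atTop (hc : 0 < c) (k : ℕ) {s : ℝ} (hs : k < s) :
    Tendsto (fun u => u ^ k * (1 + c * u) ^ (-s)) atTop (𝓝 0) := by
  have hbase : Tendsto (fun u => 1 + c * u) atTop atTop :=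
    tendsto_atTop_add_const_left _ 1 (tendsto_id.const_mul_atTop hc)
  have hbound : Tendsto (fun u => (1 + c * u) ^ (-(s - k)) / c ^ k) atTop (𝓝 0) := by
    simpa using ((tendsto_rpow_neg_atTop (sub_pos.2 hs)).comp hbase).div_const (c ^ k)
  refine squeeze_zero' ?_ ?_ hbound <;> filter_upwards [eventually_ge_atTop 0] with u hu
  · positivity
  · exact pow_mul_one_add_mul_rpow_neg_le hc k s hu

lemma tendsto_baskakovBasis_atTop (hc : 0 < c) {m : ℝ} (hm : 0 < m) (i : ℕ) :
    Tendsto (baskakovBasis c m i) atTop (𝓝 0) := by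
  have h := (tendsto_pow_mul_one_add_mul_rpow_neg_atTop hc i
    (s := m / c + i) (by linarith [div_pos hm hc])).const_mul
      ((∏ l ∈ range i, (m + c * l)) / i !)
  rw [mul_zero] at h
  exact h.congr fun u => by rw [baskakovBasis, mul_assoc]

lemma baskakovBasis_nonneg (hc : 0 ≤ c) {m : ℝ} (hm : 0 ≤ m) (i : ℕ) {t : ℝ} (ht : 0 ≤ t) :
    0 ≤ baskakovBasis c m i t := by
  unfold baskakovBasis
  positivity

lemma integral_Ioi_mul_baskakovBasis (hc : 0 < c) {m : ℝ} (hm : 0 < m) {t : ℝ} (ht : 0 ≤ t)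
    (k : ℕ) :
    ∫ u in Ioi t, m * baskakovBasis c (m + c) k u = ∑ i ∈ range (k + 1), baskakovBasis c m i t := by
  have hderiv : ∀ u ∈ Ici t, HasDerivAt (fun u => -∑ i ∈ range (k + 1), baskakovBasis c m i u)
      (m * baskakovBasis c (m + c) k u) u := fun u hu => by
    have hpos : 0 < 1 + c * u := by nlinarith [mem_Ici.1 hu]
    simpa using (hasDerivAt_sum_baskakovBasis m hc.ne' hpos.ne' k).fun_neg
  have hlim : Tendsto (fun u => -∑ i ∈ range (k + 1), baskakovBasis c m i u) atTop (𝓝 0) := by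
    simpa using (tendsto_finsetSum _ fun i _ => tendsto_baskakovBasis_atTop hc hm i).neg
  rw [integral_Ioi_of_hasDerivAt_of_nonneg' hderiv (fun u hu => mul_nonneg hm.le
    (baskakovBasis_nonneg hc.le (by positivity) k (ht.trans (mem_Ioi.1 hu).le))) hlim]
  ring

end Tail

/-- Lemma 2 (c > 0, j = 0): the tail integral of the density μ_{n,1,ρ} equals the sum
of Baskakov basis functions p_{nρ+c,i}.  Here B(x,y) = Γ(x)Γ(y)/Γ(x+y). -/
theorem stmt_4 (c n : ℝ) (hc : 0 < c) (hn : c < n) (ρ : ℕ) (hρ : 1 ≤ ρ)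
    (t : ℝ) (ht : 0 ≤ t) :
    (c ^ ρ / (Real.Gamma ρ * Real.Gamma (n * ρ / c + 1) / Real.Gamma (ρ + n * ρ / c + 1))) *
      (∫ u in Set.Ioi t, u ^ (ρ - 1) * (1 + c * u) ^ (-((n / c + 1) * (ρ : ℝ) + 1))) =
    ∑ i ∈ Finset.range ρ,
      ((∏ l ∈ Finset.range i, (n * ρ + c + c * l)) / (Nat.factorial i : ℝ)) *
        t ^ i * (1 + c * t) ^ (-(n * ρ / c + 1 + (i : ℝ))) := by
  obtain ⟨k, rfl⟩ : ∃ k, ρ = k + 1 := ⟨ρ - 1, by omega⟩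
  set m := n * ((k + 1 : ℕ) : ℝ) + c
  have hm : 0 < m := by have := hc.trans hn; positivity
  have hmc : m / c = n * ((k + 1 : ℕ) : ℝ) / c + 1 := by rw [add_div, div_self hc.ne']
  have hbeta : c ^ (k + 1) / (Real.Gamma ((k + 1 : ℕ) : ℝ) *
      Real.Gamma (n * ((k + 1 : ℕ) : ℝ) / c + 1) /
        Real.Gamma (((k + 1 : ℕ) : ℝ) + n * ((k + 1 : ℕ) : ℝ) / c + 1)) =
      (∏ l ∈ range (k + 1), (m + c * l)) / k ! := by
    rw [show ((k + 1 : ℕ) : ℝ) + n * ((k + 1 : ℕ) : ℝ) / c + 1 = m / c + (k + 1 : ℕ) by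
      rw [hmc]; ring, ← hmc, pow_div_beta_eq_prod c (by positivity), mul_div_cancel₀ _ hc.ne']
  have hdensity : ∀ u : ℝ, (∏ l ∈ range (k + 1), (m + c * l)) / k ! *
      (u ^ (k + 1 - 1) * (1 + c * u) ^ (-((n / c + 1) * ((k + 1 : ℕ) : ℝ) + 1))) =
      m * baskakovBasis c (m + c) k u := fun u => by
    rw [mul_baskakovBasis_add hc.ne', hmc, Nat.add_sub_cancel, mul_assoc]
    congr 3
    push_cast
    field_simp
    ring
  simp_rw [hbeta, ← integral_const_mul, hdensity, integral_Ioi_mul_baskakovBasis hc hm ht,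
    baskakovBasis, hmc]
end

section
/- For integers n ≥ 1, ρ ≥ 1, j ≥ 0, the function ω_{n,j,ρ} defined (in the c = 0 case) by ω_{n,0,ρ}(t) = ∫_t^∞ μ_{n,1,ρ}(u) du and ω_{n,j,ρ}(t) = ∫_0^t (μ_{n,j,ρ}(u) − μ_{n,j+1,ρ}(u)) du for j ≥ 1, satisfies ω_{n,j,ρ}(t) ≥ 0 for all t ≥ 0. -/
/-!
For `j ≥ 1`, `μ_{n,j,ρ}` is the Erlang density of shape `jρ` and rate `r = nρ`, whose distribution
function on `[0, t]` is `1 - ∑_{i < jρ} p_{r,i}(t)` with Poisson weights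
`p_{r,i}(t) = (rt)^i e^{-rt} / i!`. Hence `ω_{n,j,ρ}(t) = ∑_{jρ ≤ i < (j+1)ρ} p_{r,i}(t) ≥ 0`.
For `j = 0` the integrand `μ_{n,1,ρ}` is itself nonnegative on `(t, ∞)`.
-/

open MeasureTheory Finset Real
open scoped Nat

noncomputable def poissonWeight (r : ℝ) (i : ℕ) (t : ℝ) : ℝ :=
  r ^ i * t ^ i / i ! * exp (-r * t)

lemma poissonWeight_nonneg {r t : ℝ} (hr : 0 ≤ r) (ht : 0 ≤ t) (i : ℕ) :
    0 ≤ poissonWeight r i t := by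
  unfold poissonWeight; positivity

section

variable (r : ℝ)

lemma poissonWeight_zero_right (i : ℕ) : poissonWeight r i 0 = if i = 0 then 1 else 0 := by
  rcases i with _ | i <;> simp [poissonWeight]

lemma hasDerivAt_poissonWeight_zero (t : ℝ) :
    HasDerivAt (poissonWeight r 0) (-(r * poissonWeight r 0 t)) t := by
  refine (((hasDerivAt_id t).const_mul (-r)).exp).congr_deriv ?_ |>.congr_of_eventuallyEq ?_
  · simp [poissonWeight, mul_comm]
  · exact .of_forall fun s => by simp [poissonWeight]

lemma hasDerivAt_poissonWeight_succ (i : ℕ) (t : ℝ) :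
    HasDerivAt (poissonWeight r (i + 1))
      (r * (poissonWeight r i t - poissonWeight r (i + 1) t)) t := by
  have hexp := ((hasDerivAt_id t).const_mul (-r)).exp
  have hpow := ((hasDerivAt_pow (i + 1) t).const_mul (r ^ (i + 1))).div_const ((i + 1)! : ℝ)
  refine (hpow.mul hexp).congr_deriv ?_
  simp only [poissonWeight, id, mul_one, Nat.factorial_succ, Nat.cast_mul, Nat.add_sub_cancel]
  field_simp
  push_cast
  ring

lemma hasDerivAt_sum_range_poissonWeight (k : ℕ) (t : ℝ) :
    HasDerivAt (fun s => ∑ i ∈ range (k + 1), poissonWeight r i s)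
      (-(r * poissonWeight r k t)) t := by
  induction k with
  | zero => simpa using hasDerivAt_poissonWeight_zero r t
  | succ k ih =>
    simp only [sum_range_succ _ (k + 1)]
    exact (ih.fun_add (hasDerivAt_poissonWeight_succ r k t)).congr_deriv (by ring)

lemma integral_mul_poissonWeight (k : ℕ) (t : ℝ) :
    ∫ u in (0 : ℝ)..t, r * poissonWeight r k u = 1 - ∑ i ∈ range (k + 1), poissonWeight r i t := by
  have hcont : Continuous fun u => r * poissonWeight r k u := by
    unfold poissonWeight; fun_prop
  have hderiv u : HasDerivAt (fun s => -∑ i ∈ range (k + 1), poissonWeight r i s)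
      (r * poissonWeight r k u) u := by
    simpa using (hasDerivAt_sum_range_poissonWeight r k u).fun_neg
  rw [intervalIntegral.integral_eq_sub_of_hasDerivAt (fun u _ => hderiv u)
    (hcont.intervalIntegrable 0 t)]
  simp [poissonWeight_zero_right]
  ring

lemma integral_mul_poissonWeight_sub_mul_poissonWeight {a b : ℕ} (hab : a ≤ b) (t : ℝ) :
    ∫ u in (0 : ℝ)..t, (r * poissonWeight r a u - r * poissonWeight r b u) =
      ∑ i ∈ Ico (a + 1) (b + 1), poissonWeight r i t := by
  have hint k : IntervalIntegrable (fun u => r * poissonWeight r k u) volume 0 t := by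
    apply Continuous.intervalIntegrable; unfold poissonWeight; fun_prop
  rw [intervalIntegral.integral_sub (hint a) (hint b), integral_mul_poissonWeight,
    integral_mul_poissonWeight, sum_Ico_eq_sub _ (by omega)]
  ring

lemma gammaDensity_nat_eq_mul_poissonWeight {k : ℕ} (hk : 1 ≤ k) (t : ℝ) :
    r ^ k / Gamma k * t ^ (k - 1) * exp (-r * t) = r * poissonWeight r (k - 1) t := by
  obtain ⟨k, rfl⟩ := Nat.exists_eq_add_of_le' hk
  rw [Nat.cast_succ, Gamma_nat_eq_factorial, Nat.add_sub_cancel, poissonWeight]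
  ring

end

theorem stmt_6_general (n ρ j : ℕ) (hρ : 1 ≤ ρ) (t : ℝ) (ht : 0 ≤ t) :
    let μ : ℕ → ℝ → ℝ := fun m u =>
      ((n * ρ : ℝ) ^ (m * ρ) / Real.Gamma (↑(m * ρ))) * u ^ (m * ρ - 1) *
        Real.exp (-(n * ρ : ℝ) * u)
    let ω : ℝ → ℝ := fun s =>
      if j = 0 then ∫ u in Set.Ioi s, μ 1 u
      else ∫ u in (0:ℝ)..s, (μ j u - μ (j + 1) u)
    0 ≤ ω t := by
  intro μ ω
  have hr : (0 : ℝ) ≤ n * ρ := by positivity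
  have hμ {m : ℕ} (hm : 1 ≤ m) u : μ m u = n * ρ * poissonWeight (n * ρ) (m * ρ - 1) u :=
    gammaDensity_nat_eq_mul_poissonWeight _ (Nat.one_le_iff_ne_zero.mpr (by positivity)) u
  by_cases hj : j = 0
  · refine (if_pos hj).trans_ge (setIntegral_nonneg measurableSet_Ioi fun u hu => ?_)
    rw [hμ le_rfl]
    exact mul_nonneg hr (poissonWeight_nonneg hr (ht.trans hu.le) _)
  · have hj1 : 1 ≤ j := Nat.one_le_iff_ne_zero.mpr hj
    simp only [ω, if_neg hj, hμ hj1, hμ (hj1.trans j.le_succ)]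
    have hshape : j * ρ - 1 ≤ (j + 1) * ρ - 1 := by gcongr; exact j.le_succ
    rw [integral_mul_poissonWeight_sub_mul_poissonWeight _ hshape]
    exact sum_nonneg fun i _ => poissonWeight_nonneg hr ht i

/-- Nonnegativity of ω_{n,j,ρ} (case c = 0), where ω_{n,0,ρ} is a tail integral of
μ_{n,1,ρ} and ω_{n,j,ρ} (j ≥ 1) is ∫_0^t (μ_{n,j,ρ} − μ_{n,j+1,ρ}). -/
theorem stmt_6 (n ρ j : ℕ) (hn : 1 ≤ n) (hρ : 1 ≤ ρ) (t : ℝ) (ht : 0 ≤ t) :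
    let μ : ℕ → ℝ → ℝ := fun m u =>
      ((n * ρ : ℝ) ^ (m * ρ) / Real.Gamma (↑(m * ρ))) * u ^ (m * ρ - 1) *
        Real.exp (-(n * ρ : ℝ) * u)
    let ω : ℝ → ℝ := fun s =>
      if j = 0 then ∫ u in Set.Ioi s, μ 1 u
      else ∫ u in (0:ℝ)..s, (μ j u - μ (j + 1) u)
    0 ≤ ω t :=
  stmt_6_general n ρ j hρ t ht
end

section
/- For n > 0 real, integer ρ ≥ 1, j ≥ 0, and t ≥ 0 (case c = 0), the derivative of ω_{n,j,ρ}(t) = Σ_{i=0}^{ρ−1} p_{nρ, i+jρ}(t) satisfies: ω_{n,0,ρ}'(t) = −μ_{n,1,ρ}(t), and for j ≥ 1, ω_{n,j,ρ}'(t) = μ_{n,j,ρ}(t) − μ_{n,j+1,ρ}(t), where p_{m,i}(t) = m^i t^i e^{−mt}/i! and μ_{n,j,ρ}(t) = ((nρ)^{jρ}/Γ(jρ)) t^{jρ−1} e^{−nρt}. -/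
/-!
Writing `p_{m,k}(y) = m^k y^k e^{-my} / k!` for the Szász basis and
`g_{m,k}(y) = m^k y^{k-1} e^{-my} / Γ(k)` for the gamma density, one has
`g_{m,k+1} = m p_{m,k}`, so `p_{m,k}' = m (p_{m,k-1} - p_{m,k}) = g_{m,k} - g_{m,k+1}`.
Summing over a block of `ρ` consecutive indices telescopes to `g_{m,jρ} - g_{m,(j+1)ρ}`;
as `g_{m,0} = 0`, the case `j = 0` is the same formula.
-/

open Nat

noncomputable section

def szaszBasis (m : ℝ) (k : ℕ) (y : ℝ) : ℝ :=
  m ^ k * y ^ k * Real.exp (-m * y) / (k ! : ℝ)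

/-- For `k = 0` this vanishes, since `Real.Gamma 0 = 0` and division by zero gives zero. -/
def gammaDensity (m : ℝ) (k : ℕ) (y : ℝ) : ℝ :=
  m ^ k / Real.Gamma k * y ^ (k - 1) * Real.exp (-m * y)

end

@[simp]
theorem gammaDensity_zero (m y : ℝ) : gammaDensity m 0 y = 0 := by
  simp [gammaDensity]

theorem gammaDensity_succ (m : ℝ) (k : ℕ) (y : ℝ) :
    gammaDensity m (k + 1) y = m * szaszBasis m k y := by
  rw [gammaDensity, szaszBasis, Nat.cast_succ, Real.Gamma_nat_eq_factorial,
    Nat.add_sub_cancel, pow_succ]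
  ring

theorem hasDerivAt_szaszBasis (m : ℝ) (k : ℕ) (t : ℝ) :
    HasDerivAt (szaszBasis m k) (gammaDensity m k t - gammaDensity m (k + 1) t) t := by
  have hexp : HasDerivAt (fun y => Real.exp (-m * y)) (Real.exp (-m * t) * -m) t := by
    simpa using ((hasDerivAt_id t).const_mul (-m)).exp
  refine ((((hasDerivAt_pow k t).const_mul (m ^ k)).fun_mul hexp).div_const
    (k ! : ℝ)).congr_deriv ?_
  rw [gammaDensity_succ, szaszBasis]
  cases k with
  | zero => simp [mul_comm]
  | succ k =>
    rw [gammaDensity_succ, szaszBasis, Nat.factorial_succ, Nat.add_sub_cancel]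
    push_cast
    field_simp
    ring

theorem hasDerivAt_sum_szaszBasis (m : ℝ) (r a : ℕ) (t : ℝ) :
    HasDerivAt (fun y => ∑ i ∈ Finset.range r, szaszBasis m (i + a) y)
      (gammaDensity m a t - gammaDensity m (r + a) t) t := by
  have h := HasDerivAt.fun_sum (u := Finset.range r) fun i _ =>
    hasDerivAt_szaszBasis m (i + a) t
  refine h.congr_deriv ?_
  simpa [add_right_comm] using
    Finset.sum_range_sub' (fun i => gammaDensity m (i + a) t) r

theorem stmt_16_general (n : ℝ) (ρ j : ℕ) (t : ℝ) :
    let p : ℕ → ℝ → ℝ := fun i y =>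
      (n * ρ : ℝ) ^ i * y ^ i * Real.exp (-(n * ρ) * y) / (Nat.factorial i : ℝ)
    let μ : ℕ → ℝ → ℝ := fun m y =>
      ((n * ρ : ℝ) ^ (m * ρ) / Real.Gamma (↑(m * ρ))) * y ^ (m * ρ - 1) *
        Real.exp (-(n * ρ) * y)
    let ω : ℝ → ℝ := fun y => ∑ i ∈ Finset.range ρ, p (i + j * ρ) y
    (j = 0 → HasDerivAt ω (-μ 1 t) t) ∧
    (1 ≤ j → HasDerivAt ω (μ j t - μ (j + 1) t) t) := by
  intro p μ ω
  have hω : HasDerivAt ω (μ j t - μ (j + 1) t) t := by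
    have h := hasDerivAt_sum_szaszBasis (n * ρ) ρ (j * ρ) t
    rwa [show ρ + j * ρ = (j + 1) * ρ by ring] at h
  refine ⟨fun hj => ?_, fun _ => hω⟩
  subst hj
  simpa [μ] using hω

/-- Differentiated form of Lemma 2 (c = 0): the derivative of
ω_{n,j,ρ}(t) = Σ_{i=0}^{ρ−1} p_{nρ, i+jρ}(t) is −μ_{n,1,ρ}(t) if j = 0,
and μ_{n,j,ρ}(t) − μ_{n,j+1,ρ}(t) if j ≥ 1. -/
theorem stmt_16 (n : ℝ) (hn : 0 < n) (ρ j : ℕ) (hρ : 1 ≤ ρ) (t : ℝ) (ht : 0 ≤ t) :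
    let p : ℕ → ℝ → ℝ := fun i y =>
      (n * ρ : ℝ) ^ i * y ^ i * Real.exp (-(n * ρ) * y) / (Nat.factorial i : ℝ)
    let μ : ℕ → ℝ → ℝ := fun m y =>
      ((n * ρ : ℝ) ^ (m * ρ) / Real.Gamma (↑(m * ρ))) * y ^ (m * ρ - 1) *
        Real.exp (-(n * ρ) * y)
    let ω : ℝ → ℝ := fun y => ∑ i ∈ Finset.range ρ, p (i + j * ρ) y
    (j = 0 → HasDerivAt ω (-μ 1 t) t) ∧
    (1 ≤ j → HasDerivAt ω (μ j t - μ (j + 1) t) t) :=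
  stmt_16_general n ρ j t
end
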